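/- arXiv:2303.05027 — 2 statements merged into one kernel-verified Lean document; each statement's English description precedes it below -/
import Mathlib

section
/- Let r ≥ 2 be a positive integer and λ > 1 a real number. Then there exists a constant c > 0 such that for every n ∈ ℕ, if R ⊆ {1,…,r}^{1,…,n} satisfies |R| ≥ ((r−1)λ)^n, then there exists a subset J ⊆ {1,…,n} with |J| ≥ c·n such that for every s ∈ {1,…,r}^J there exists š ∈ R with š(j) = s(j) for all j ∈ J. -/
/-!
Split `R ⊆ α^(n+1)` by its first coordinate into the slices `R_a = {f | a :: f ∈ R}`. Counting
multiplicities, `∑ₐ |R_a| ≤ (r - 1) |⋃ₐ R_a| + |⋂ₐ R_a|`; a set traced by the union lifts to a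
set traced by `R`, and a set traced by the intersection lifts together with the first coordinate.
Induction on `n` thus bounds a family tracing no `k`-set by `∑_{i<k} C(n,i) (r-1)^(n-i)`, which is
at most `(r-1)^n ∑_{i<k} C(n,i)`. For `k = ⌈cn⌉` this binomial tail is `< λ^n`: from
`x^k ∑_{i<k} C(n,i) ≤ x (1+x)^n` with `0 < x < 1` and `c` chosen so that `λ x^c = 1 + x`.
-/

open Finset

def Traces {ι α : Type*} (R : Finset (ι → α)) (J : Finset ι) : Prop :=
  ∀ s : ι → α, ∃ g ∈ R, ∀ j ∈ J, g j = s j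

lemma traces_empty {ι α : Type*} {R : Finset (ι → α)} (hR : R.Nonempty) : Traces R ∅ :=
  fun _ => ⟨hR.choose, hR.choose_spec, by simp⟩

def karpovskyMilmanBound (r n k : ℕ) : ℕ :=
  ∑ i ∈ range k, n.choose i * (r - 1) ^ (n - i)

lemma karpovskyMilmanBound_zero_succ (r k : ℕ) : karpovskyMilmanBound r 0 (k + 1) = 1 := by
  simp [karpovskyMilmanBound, sum_range_succ']

lemma karpovskyMilmanBound_succ_succ (r n k : ℕ) :
    karpovskyMilmanBound r (n + 1) (k + 1) =
      (r - 1) * karpovskyMilmanBound r n (k + 1) + karpovskyMilmanBound r n k := by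
  have hterm : ∀ i ∈ range k, (n + 1).choose (i + 1) * (r - 1) ^ (n + 1 - (i + 1)) =
      (r - 1) * (n.choose (i + 1) * (r - 1) ^ (n - (i + 1))) + n.choose i * (r - 1) ^ (n - i) := by
    intro i _
    rw [Nat.add_sub_add_right, Nat.choose_succ_succ', add_mul, add_comm]
    congr 1
    rcases lt_or_ge i n with hin | hin
    · rw [show n - i = n - (i + 1) + 1 by omega, pow_succ]
      ring
    · simp [Nat.choose_eq_zero_of_lt (show n < i + 1 by omega)]
  simp only [karpovskyMilmanBound]
  rw [sum_range_succ', sum_congr rfl hterm, sum_add_distrib,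
    sum_range_succ' (fun i => n.choose i * (r - 1) ^ (n - i)) k, mul_add, mul_sum]
  simp only [Nat.choose_zero_right, Nat.sub_zero, one_mul, pow_succ]
  ring

lemma karpovskyMilmanBound_le {r : ℕ} (hr : 2 ≤ r) (n k : ℕ) :
    karpovskyMilmanBound r n k ≤ (r - 1) ^ n * ∑ i ∈ range k, n.choose i := by
  rw [karpovskyMilmanBound, mul_sum]
  refine sum_le_sum fun i _ => ?_
  rw [mul_comm ((r - 1) ^ n)]
  gcongr <;> omega

theorem sum_card_le_card_biUnion_add_card_filter {α β : Type*} [Fintype α] [DecidableEq β]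
    (S : α → Finset β) :
    ∑ a, #(S a) ≤
      (Fintype.card α - 1) * #(univ.biUnion S) + #{x ∈ univ.biUnion S | ∀ a, x ∈ S a} := by
  classical
  set U := univ.biUnion S
  have hcount : ∑ a, #(S a) = ∑ x ∈ U, #{a | x ∈ S a} := by
    refine .trans (sum_congr rfl fun a _ => ?_)
      (sum_card_bipartiteAbove_eq_sum_card_bipartiteBelow (r := fun a x => x ∈ S a))
    rw [bipartiteAbove, filter_mem_eq_inter,
      inter_eq_right.2 (subset_biUnion_of_mem S (mem_univ a))]
  have hmult : ∀ x, #{a | x ∈ S a} ≤ (Fintype.card α - 1) + if ∀ a, x ∈ S a then 1 else 0 := by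
    intro x
    by_cases hx : ∀ a, x ∈ S a
    · rw [if_pos hx]
      have := card_le_univ {a | x ∈ S a}
      omega
    · obtain ⟨a₀, ha₀⟩ := not_forall.1 hx
      rw [if_neg hx, add_zero, ← card_univ, ← card_erase_of_mem (mem_univ a₀)]
      exact card_le_card fun a ha => mem_erase.2 ⟨by rintro rfl; simp_all, mem_univ a⟩
  calc ∑ a, #(S a) = ∑ x ∈ U, #{a | x ∈ S a} := hcount
    _ ≤ ∑ x ∈ U, ((Fintype.card α - 1) + if ∀ a, x ∈ S a then 1 else 0) :=
        sum_le_sum fun x _ => hmult x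
    _ = _ := by rw [sum_add_distrib, sum_const, smul_eq_mul, mul_comm, card_filter]

section ConsPreimage

variable {α : Type*} {n : ℕ}

noncomputable def consPreimage (R : Finset (Fin (n + 1) → α)) (a : α) : Finset (Fin n → α) :=
  R.preimage (Fin.cons (α := fun _ => α) a) (Fin.cons_right_injective (α := fun _ => α) a).injOn

@[simp]
lemma mem_consPreimage {R : Finset (Fin (n + 1) → α)} {a : α} {f : Fin n → α} :
    f ∈ consPreimage R a ↔ Fin.cons a f ∈ R :=
  mem_preimage

lemma card_eq_sum_card_consPreimage [Fintype α] (R : Finset (Fin (n + 1) → α)) :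
    #R = ∑ a, #(consPreimage R a) := by
  classical
  rw [card_eq_sum_card_fiberwise (f := fun g => g 0) (t := univ) (fun _ _ => mem_univ _)]
  refine sum_congr rfl fun a _ => ?_
  rw [consPreimage, card_preimage]
  congr 1
  refine filter_congr fun g _ => ⟨fun h => ⟨Fin.tail g, ?_⟩, ?_⟩
  · rw [← h, Fin.cons_self_tail]
  · rintro ⟨f, rfl⟩
    rfl

variable [Fintype α] [DecidableEq α] {R : Finset (Fin (n + 1) → α)} {J : Finset (Fin n)}

lemma Traces.map_succ (h : Traces (univ.biUnion (consPreimage R)) J) :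
    Traces R (J.map (Fin.succEmb n)) := by
  intro s
  obtain ⟨f, hf, hfs⟩ := h (Fin.tail s)
  obtain ⟨a, -, haf⟩ := mem_biUnion.1 hf
  refine ⟨Fin.cons a f, mem_consPreimage.1 haf, ?_⟩
  simpa [Fin.tail] using hfs

lemma Traces.cons_zero_map_succ
    (h : Traces {f ∈ univ.biUnion (consPreimage R) | ∀ a, f ∈ consPreimage R a} J) :
    Traces R (cons 0 (J.map (Fin.succEmb n)) (by simp [Fin.succ_ne_zero])) := by
  intro s
  obtain ⟨f, hf, hfs⟩ := h (Fin.tail s)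
  refine ⟨Fin.cons (s 0) f, mem_consPreimage.1 ((mem_filter.1 hf).2 (s 0)), ?_⟩
  simpa [Fin.tail] using hfs

end ConsPreimage

theorem card_le_karpovskyMilmanBound {α : Type*} [Fintype α] [DecidableEq α] :
    ∀ {n k : ℕ} {R : Finset (Fin n → α)}, (∀ J, Traces R J → #J < k) →
      #R ≤ karpovskyMilmanBound (Fintype.card α) n k
  | _, 0, R, h => by
    obtain rfl : R = ∅ := not_nonempty_iff_eq_empty.1 fun hR => by simpa using h ∅ (traces_empty hR)
    simp
  | 0, k + 1, R, _ => by
    rw [karpovskyMilmanBound_zero_succ]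
    exact card_le_one_of_subsingleton R
  | n + 1, k + 1, R, h => by
    have htails := card_le_karpovskyMilmanBound (k := k + 1) fun J hJ => by
      simpa using h _ hJ.map_succ
    have hfull := card_le_karpovskyMilmanBound (k := k) fun J hJ => by
      simpa using h _ hJ.cons_zero_map_succ
    calc #R = ∑ a, #(consPreimage R a) := card_eq_sum_card_consPreimage R
      _ ≤ _ := sum_card_le_card_biUnion_add_card_filter (consPreimage R)
      _ ≤ _ := by gcongr
      _ = _ := (karpovskyMilmanBound_succ_succ _ n k).symm

theorem exists_traces_of_karpovskyMilmanBound_lt {α : Type*} [Fintype α] [DecidableEq α] {n k : ℕ}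
    {R : Finset (Fin n → α)} (hR : karpovskyMilmanBound (Fintype.card α) n k < #R) :
    ∃ J, k ≤ #J ∧ Traces R J := by
  contrapose! hR
  exact card_le_karpovskyMilmanBound fun J hJ => not_le.1 fun hk => hR J hk hJ

section BinomialTail

variable {R : Type*} [CommSemiring R] [PartialOrder R] [IsOrderedRing R] {x : R}

lemma sum_range_pow_mul_choose_le_one_add_pow (hx : 0 ≤ x) (n k : ℕ) :
    ∑ i ∈ range k, x ^ i * n.choose i ≤ (1 + x) ^ n := by
  rw [add_comm, add_pow]
  simp only [one_pow, mul_one]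
  calc ∑ i ∈ range k, x ^ i * n.choose i
      ≤ ∑ i ∈ range (max k (n + 1)), x ^ i * n.choose i :=
        sum_le_sum_of_subset_of_nonneg (range_subset_range.2 (le_max_left _ _))
          fun _ _ _ => by positivity
    _ = ∑ i ∈ range (n + 1), x ^ i * n.choose i :=
        (sum_subset (range_subset_range.2 (le_max_right _ _)) fun i _ hi => by
          rw [Nat.choose_eq_zero_of_lt (by simpa using hi)]
          simp).symm

lemma pow_mul_sum_range_choose_le (hx0 : 0 ≤ x) (hx1 : x ≤ 1) (n k : ℕ) :
    x ^ k * ∑ i ∈ range k, (n.choose i : R) ≤ x * (1 + x) ^ n :=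
  calc x ^ k * ∑ i ∈ range k, (n.choose i : R)
      ≤ ∑ i ∈ range k, x * (x ^ i * n.choose i) := by
        rw [mul_sum]
        refine sum_le_sum fun i hi => ?_
        rw [← mul_assoc, ← pow_succ']
        exact mul_le_mul_of_nonneg_right (pow_le_pow_of_le_one hx0 hx1 (mem_range.1 hi))
          (Nat.cast_nonneg _)
    _ ≤ x * (1 + x) ^ n := by
        rw [← mul_sum]
        gcongr
        exact sum_range_pow_mul_choose_le_one_add_pow hx0 n k

end BinomialTail

lemma exists_sum_range_choose_lt_pow {lam : ℝ} (hlam : 1 < lam) :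
    ∃ c : ℝ, 0 < c ∧ ∀ n : ℕ, ∑ i ∈ range ⌈c * n⌉₊, (n.choose i : ℝ) < lam ^ n := by
  set x := (lam - 1) / (lam + 1)
  have hx0 : 0 < x := div_pos (by linarith) (by linarith)
  have hx1 : x < 1 := (div_lt_one (by linarith)).2 (by linarith)
  have hxlam : 1 + x < lam := by
    linarith [div_lt_self (by linarith : 0 < lam - 1) (by linarith : 1 < lam + 1)]
  set c := Real.logb x ((1 + x) / lam)
  have hc : 0 < c :=
    Real.logb_pos_of_base_lt_one hx0 hx1 (by positivity) ((div_lt_one (by linarith)).2 hxlam)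
  have hxc : lam * x ^ c = 1 + x := by
    rw [Real.rpow_logb hx0 hx1.ne (by positivity)]
    field_simp
  refine ⟨c, hc, fun n => ?_⟩
  set k := ⌈c * n⌉₊
  have hk : x * (1 + x) ^ n < x ^ k * lam ^ n :=
    calc x * (1 + x) ^ n = x ^ (c * n + 1) * lam ^ n := by
          rw [← hxc, mul_pow, ← Real.rpow_mul_natCast hx0.le, Real.rpow_add_one hx0.ne']
          ring
      _ < x ^ k * lam ^ n := by
          gcongr
          rw [← Real.rpow_natCast]
          exact Real.rpow_lt_rpow_of_exponent_gt hx0 hx1 (Nat.ceil_lt_add_one (by positivity))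
  exact lt_of_mul_lt_mul_left ((pow_mul_sum_range_choose_le hx0.le hx1.le n k).trans_lt hk)
    (by positivity)

/-- Karpovsky–Milman–Alon generalization of the Sauer–Perles–Shelah lemma. -/
theorem stmt0 (r : ℕ) (hr : 2 ≤ r) (lam : ℝ) (hlam : 1 < lam) :
    ∃ c : ℝ, 0 < c ∧ ∀ n : ℕ, ∀ R : Finset (Fin n → Fin r),
      (((r : ℝ) - 1) * lam) ^ n ≤ (R.card : ℝ) →
      ∃ J : Finset (Fin n), c * n ≤ (J.card : ℝ) ∧
        ∀ s : Fin n → Fin r, ∃ sc ∈ R, ∀ j ∈ J, sc j = s j := by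
  obtain ⟨c, hc, hbinom⟩ := exists_sum_range_choose_lt_pow hlam
  refine ⟨c, hc, fun n R hR => ?_⟩
  set k := ⌈c * n⌉₊
  have hbound : (karpovskyMilmanBound r n k : ℝ) < R.card :=
    calc (karpovskyMilmanBound r n k : ℝ)
        ≤ ((r : ℝ) - 1) ^ n * ∑ i ∈ range k, (n.choose i : ℝ) := by
          have := karpovskyMilmanBound_le hr n k
          rw [← Nat.cast_one, ← Nat.cast_sub (by omega)]
          exact_mod_cast this
      _ < (((r : ℝ) - 1) * lam) ^ n := by
          have : (2 : ℝ) ≤ r := by exact_mod_cast hr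
          rw [mul_pow]
          gcongr
          · exact pow_pos (by linarith) n
          · exact hbinom n
      _ ≤ R.card := hR
  obtain ⟨J, hJ, hRJ⟩ := exists_traces_of_karpovskyMilmanBound_lt (α := Fin r) (k := k)
    (by rw [Fintype.card_fin]; exact_mod_cast hbound)
  exact ⟨J, (Nat.le_ceil _).trans (by exact_mod_cast hJ), hRJ⟩
end

section
/- Let (X,𝒳,μ,T) be an invertible measure-preserving system, y a point with fiber measure μ_y satisfying the equivariance (T^i)_*μ_y = μ_{S^i y}, α a partition of X into r atoms, and l ∈ ℕ. For times 0 ≤ b₁ < b₂ < ⋯ < b_k with b_{j+1} − b_j a positive multiple of l, one has H_{μ_y}(⋁_{j=1}^k T^{−b_j} α) ≥ Σ_{j=1}^k h_{μ_{S^{b_j} y}}(T^l, α), where h_{μ_z}(T^l,α) := lim_{n→∞} H_{μ_z}(α | ⋁_{i=1}^n T^{−il} α). -/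
open MeasureTheory Filter

/-- Shannon entropy of a finite measurable partition `α` under a measure `m`. -/
noncomputable def partEnt {X : Type*} [MeasurableSpace X] (m : Measure X)
    {ι : Type*} [Fintype ι] (α : ι → Set X) : ℝ :=
  ∑ i, Real.negMulLog (m (α i)).toReal

/-- Conditional Shannon entropy `H_m(α | β)` of finite partitions. -/
noncomputable def condEnt {X : Type*} [MeasurableSpace X] (m : Measure X)
    {ι κ : Type*} [Fintype ι] [Fintype κ] (α : ι → Set X) (β : κ → Set X) : ℝ :=
  ∑ i, ∑ k,
    -((m (α i ∩ β k)).toReal * Real.log ((m (α i ∩ β k)).toReal / (m (β k)).toReal))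

/-- The join `⋁_{i=1}^n T^{-il} α`, as a partition indexed by `Fin n → Fin r`. -/
def joinIter {X : Type*} (T : X → X) (l : ℕ) {r : ℕ} (α : Fin r → Set X) (n : ℕ) :
    (Fin n → Fin r) → Set X :=
  fun s => ⋂ i : Fin n, T^[((i : ℕ) + 1) * l] ⁻¹' α (s i)

/-- The fiber dynamical entropy `h_m(T^l, α) = lim_n H_m(α | ⋁_{i=1}^n T^{-il} α)`
(the limit exists since the sequence is monotone; we record it as a `limsup`). -/
noncomputable def fiberDynEnt {X : Type*} [MeasurableSpace X] (m : Measure X)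
    (T : X → X) (l : ℕ) {r : ℕ} (α : Fin r → Set X) : ℝ :=
  limsup (fun n => condEnt m α (joinIter T l α n)) atTop

/-!
Peel off the first time `b₀`. By the chain rule,
`H(⋁_j T^{-b_j} α) = H(⋁_{j>0} T^{-b_j} α) + H(T^{-b₀} α | ⋁_{j>0} T^{-b_j} α)`, and the first
term is handled by induction. Since every `b_j - b₀` (`j > 0`) is a positive multiple of `l`,
the partition `T^{-b₀} ⋁_{i=1}^N T^{-il} α` refines `⋁_{j>0} T^{-b_j} α` for `N` large, and
conditioning on a finer partition lowers entropy (concavity of `x ↦ -x log x`). Pushing `μ_y`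
forward by `T^{b₀}` gives `μ_{S^{b₀} y}`, so the conditional term is at least
`H_{μ_{S^{b₀} y}}(α | ⋁_{i=1}^N T^{-il} α) ≥ h_{μ_{S^{b₀} y}}(T^l, α)`.
-/

open Set Function

namespace Real

lemma neg_mul_log_div_eq_mul_negMulLog (a b : ℝ) :
    -(a * log (a / b)) = b * negMulLog (a / b) := by
  rcases eq_or_ne b 0 with rfl | hb
  · simp
  · rw [negMulLog]
    field_simp

lemma sum_negMulLog_eq_negMulLog_sum_add {ι : Type*} (s : Finset ι) (p : ι → ℝ)
    (hp : ∀ i ∈ s, 0 ≤ p i) :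
    ∑ i ∈ s, negMulLog (p i) =
      negMulLog (∑ i ∈ s, p i) + ∑ i ∈ s, (∑ j ∈ s, p j) * negMulLog (p i / ∑ j ∈ s, p j) := by
  set q := ∑ j ∈ s, p j
  rcases eq_or_ne q 0 with hq | hq
  · have hp0 : ∀ i ∈ s, p i = 0 := (Finset.sum_eq_zero_iff_of_nonneg hp).1 hq
    rw [hq, Finset.sum_congr rfl fun i hi => by rw [hp0 i hi]]
    simp
  · have hsplit (i : ι) : negMulLog (p i) = p i / q * negMulLog q + q * negMulLog (p i / q) := by
      rw [← negMulLog_mul, mul_div_cancel₀ _ hq]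
    rw [Finset.sum_congr rfl fun i _ => hsplit i, Finset.sum_add_distrib, ← Finset.sum_mul,
      ← Finset.sum_div, div_self hq, one_mul]

/-- The log-sum inequality: Jensen's inequality for the perspective `(a, b) ↦ b · negMulLog (a / b)`
of the concave function `negMulLog`. -/
lemma sum_mul_negMulLog_div_le {ι : Type*} (s : Finset ι) (a b : ι → ℝ)
    (ha : ∀ i ∈ s, 0 ≤ a i) (hb : ∀ i ∈ s, 0 ≤ b i) (hab : ∀ i ∈ s, b i = 0 → a i = 0) :
    ∑ i ∈ s, b i * negMulLog (a i / b i) ≤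
      (∑ i ∈ s, b i) * negMulLog ((∑ i ∈ s, a i) / ∑ i ∈ s, b i) := by
  set B := ∑ i ∈ s, b i
  obtain hB | hB : 0 = B ∨ 0 < B := (Finset.sum_nonneg hb).eq_or_lt
  · have hb0 : ∀ i ∈ s, b i = 0 := (Finset.sum_eq_zero_iff_of_nonneg hb).1 hB.symm
    rw [← hB, zero_mul, Finset.sum_eq_zero fun i hi => by rw [hb0 i hi, zero_mul]]
  have hw : ∑ i ∈ s, b i / B = 1 := by rw [← Finset.sum_div, div_self hB.ne']
  have hmean : ∑ i ∈ s, b i / B * (a i / b i) = (∑ i ∈ s, a i) / B := by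
    rw [Finset.sum_div]
    refine Finset.sum_congr rfl fun i hi => ?_
    rcases eq_or_ne (b i) 0 with h | h
    · simp [h, hab i hi h]
    · field_simp
  have jensen := concaveOn_negMulLog.le_map_sum (t := s) (w := fun i => b i / B)
    (p := fun i => a i / b i) (fun i hi => div_nonneg (hb i hi) hB.le) hw
    (fun i hi => div_nonneg (ha i hi) (hb i hi))
  simp only [smul_eq_mul, hmean] at jensen
  calc ∑ i ∈ s, b i * negMulLog (a i / b i)
      = B * ∑ i ∈ s, b i / B * negMulLog (a i / b i) := by
        rw [Finset.mul_sum]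
        refine Finset.sum_congr rfl fun i _ => ?_
        rw [← mul_assoc, mul_div_cancel₀ _ hB.ne']
    _ ≤ B * negMulLog ((∑ i ∈ s, a i) / B) := mul_le_mul_of_nonneg_left jensen hB.le

end Real

structure IsMeasurablePartition {X ι : Type*} [MeasurableSpace X] (α : ι → Set X) : Prop where
  measurableSet : ∀ i, MeasurableSet (α i)
  pairwise_disjoint : Pairwise (Disjoint on α)
  iUnion_eq_univ : ⋃ i, α i = univ

/-- The join `⋁_j (f j)⁻¹ α`, indexed by `J → ι`. -/
def joinPreimage {X Y J ι : Type*} (f : J → X → Y) (α : ι → Set Y) : (J → ι) → Set X :=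
  fun s => ⋂ j, f j ⁻¹' α (s j)

lemma joinPreimage_subset_comp {X Y ι J J' : Type*} {f : J → X → Y} {g : J' → X → Y}
    {α : ι → Set Y} (σ : J → J') (h : ∀ j, f j = g (σ j)) (c : J' → ι) :
    joinPreimage g α c ⊆ joinPreimage f α (c ∘ σ) := by
  intro x hx
  simp only [joinPreimage, mem_iInter, mem_preimage, comp_apply] at hx ⊢
  intro j
  rw [h j]
  exact hx (σ j)

lemma preimage_joinPreimage {W X Y ι J : Type*} (g : W → X) (f : J → X → Y) (α : ι → Set Y)
    (s : J → ι) : g ⁻¹' joinPreimage f α s = joinPreimage (fun j => f j ∘ g) α s := by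
  simp only [joinPreimage, preimage_iInter]
  rfl

lemma joinPreimage_cons {X Y ι : Type*} {n : ℕ} (f : Fin (n + 1) → X → Y) (α : ι → Set Y)
    (i : ι) (t : Fin n → ι) :
    joinPreimage f α (Fin.cons i t : Fin (n + 1) → ι) =
      f 0 ⁻¹' α i ∩ joinPreimage (fun j => f j.succ) α t := by
  ext x
  simp [joinPreimage, Fin.forall_fin_succ]

section Partitions

variable {X Y ι : Type*} [MeasurableSpace X] [MeasurableSpace Y]

namespace IsMeasurablePartition

lemma preimage {α : ι → Set Y} (hα : IsMeasurablePartition α) {f : X → Y} (hf : Measurable f) :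
    IsMeasurablePartition fun i => f ⁻¹' α i where
  measurableSet i := hf (hα.measurableSet i)
  pairwise_disjoint _ _ hij := (hα.pairwise_disjoint hij).preimage f
  iUnion_eq_univ := by rw [← preimage_iUnion, hα.iUnion_eq_univ, preimage_univ]

lemma joinPreimage {J : Type*} [Countable J] {α : ι → Set Y} (hα : IsMeasurablePartition α)
    {f : J → X → Y} (hf : ∀ j, Measurable (f j)) :
    IsMeasurablePartition (joinPreimage f α) where
  measurableSet _ := MeasurableSet.iInter fun j => hf j (hα.measurableSet _)
  pairwise_disjoint s t hst := by
    obtain ⟨j, hj⟩ := Function.ne_iff.1 hst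
    exact ((hα.pairwise_disjoint hj).preimage (f j)).mono (iInter_subset _ j) (iInter_subset _ j)
  iUnion_eq_univ := by
    refine eq_univ_of_forall fun x => ?_
    choose s hs using fun j => mem_iUnion.1 (hα.iUnion_eq_univ ▸ mem_univ (f j x))
    exact mem_iUnion.2 ⟨s, mem_iInter.2 hs⟩

lemma sum_measureReal_inter [Fintype ι] {α : ι → Set X} (hα : IsMeasurablePartition α)
    (μ : Measure X) [IsFiniteMeasure μ] {s : Set X} (hs : MeasurableSet s) :
    ∑ i, μ.real (α i ∩ s) = μ.real s := by
  rw [← measureReal_iUnion_fintype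
    (fun i j hij => (hα.pairwise_disjoint hij).mono inter_subset_left inter_subset_left)
    (fun i => (hα.measurableSet i).inter hs), ← iUnion_inter, hα.iUnion_eq_univ, univ_inter]

lemma measureReal_inter_eq_sum_fiber {κ κ' : Type*} [Fintype κ'] [DecidableEq κ]
    {γ : κ' → Set X} (hγ : IsMeasurablePartition γ) (μ : Measure X) [IsFiniteMeasure μ]
    {β : κ → Set X} (hβ : Pairwise (Disjoint on β)) (π : κ' → κ) (hsub : ∀ c, γ c ⊆ β (π c))
    {s : Set X} (hs : MeasurableSet s) (k : κ) :
    μ.real (s ∩ β k) = ∑ c with π c = k, μ.real (s ∩ γ c) := by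
  have hunion : s ∩ β k = ⋃ c ∈ Finset.univ.filter (π · = k), s ∩ γ c := by
    ext x
    simp only [mem_inter_iff, mem_iUnion, Finset.mem_filter, Finset.mem_univ, true_and,
      exists_prop]
    constructor
    · rintro ⟨hxs, hxk⟩
      obtain ⟨c, hc⟩ := mem_iUnion.1 (hγ.iUnion_eq_univ ▸ mem_univ x)
      refine ⟨c, ?_, hxs, hc⟩
      by_contra hne
      exact disjoint_left.1 (hβ hne) (hsub c hc) hxk
    · rintro ⟨c, rfl, hxs, hxc⟩
      exact ⟨hxs, hsub c hxc⟩
  rw [hunion, measureReal_biUnion_finset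
    (fun c _ c' _ hcc' => (hγ.pairwise_disjoint hcc').mono inter_subset_right inter_subset_right)
    fun c _ => hs.inter (hγ.measurableSet c)]

end IsMeasurablePartition

end Partitions

section Entropy

variable {X : Type*} [MeasurableSpace X] (m : Measure X) {ι κ : Type*} [Fintype ι] [Fintype κ]

lemma partEnt_comp_equiv {ι' : Type*} [Fintype ι'] (α : ι → Set X) (e : ι' ≃ ι) :
    partEnt m (α ∘ e) = partEnt m α :=
  e.sum_comp fun i => Real.negMulLog (m (α i)).toReal

lemma partEnt_nonneg [IsProbabilityMeasure m] (α : ι → Set X) : 0 ≤ partEnt m α :=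
  Finset.sum_nonneg fun _ _ => Real.negMulLog_nonneg measureReal_nonneg measureReal_le_one

lemma condEnt_eq_sum_mul_negMulLog (α : ι → Set X) (β : κ → Set X) :
    condEnt m α β =
      ∑ i, ∑ k, m.real (β k) * Real.negMulLog (m.real (α i ∩ β k) / m.real (β k)) := by
  simp only [condEnt, Real.neg_mul_log_div_eq_mul_negMulLog]
  rfl

variable [IsFiniteMeasure m]

lemma condEnt_nonneg (α : ι → Set X) (β : κ → Set X) : 0 ≤ condEnt m α β := by
  rw [condEnt_eq_sum_mul_negMulLog]
  exact Finset.sum_nonneg fun i _ => Finset.sum_nonneg fun k _ =>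
    mul_nonneg measureReal_nonneg <| Real.negMulLog_nonneg
      (div_nonneg measureReal_nonneg measureReal_nonneg)
      (div_le_one_of_le₀ (measureReal_mono inter_subset_right) measureReal_nonneg)

lemma partEnt_inter_eq_add_condEnt {α : ι → Set X} (hα : IsMeasurablePartition α)
    {β : κ → Set X} (hβ : ∀ k, MeasurableSet (β k)) :
    partEnt m (fun p : ι × κ => α p.1 ∩ β p.2) = partEnt m β + condEnt m α β := by
  rw [condEnt_eq_sum_mul_negMulLog, Finset.sum_comm, partEnt, partEnt,
    Fintype.sum_prod_type_right, ← Finset.sum_add_distrib]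
  refine Finset.sum_congr rfl fun k _ => ?_
  have := Real.sum_negMulLog_eq_negMulLog_sum_add Finset.univ (fun i => m.real (α i ∩ β k))
    fun i _ => measureReal_nonneg
  rwa [hα.sum_measureReal_inter m (hβ k)] at this

lemma condEnt_le_of_refines {κ' : Type*} [Fintype κ'] {α : ι → Set X}
    (hα : ∀ i, MeasurableSet (α i)) {β : κ → Set X} (hβ : Pairwise (Disjoint on β))
    {γ : κ' → Set X} (hγ : IsMeasurablePartition γ) (π : κ' → κ) (hsub : ∀ c, γ c ⊆ β (π c)) :
    condEnt m α γ ≤ condEnt m α β := by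
  classical
  simp only [condEnt_eq_sum_mul_negMulLog]
  refine Finset.sum_le_sum fun i _ => ?_
  rw [← Finset.sum_fiberwise Finset.univ π]
  refine Finset.sum_le_sum fun k _ => ?_
  have hβk : m.real (β k) = ∑ c with π c = k, m.real (γ c) := by
    simpa using hγ.measureReal_inter_eq_sum_fiber m hβ π hsub MeasurableSet.univ k
  rw [hγ.measureReal_inter_eq_sum_fiber m hβ π hsub (hα i) k, hβk]
  exact Real.sum_mul_negMulLog_div_le _ _ _ (fun _ _ => measureReal_nonneg)
    (fun _ _ => measureReal_nonneg) fun c _ h =>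
      ((measureReal_mono inter_subset_right).trans_eq h).antisymm measureReal_nonneg

end Entropy

lemma condEnt_map {X Y ι κ : Type*} [MeasurableSpace X] [MeasurableSpace Y] [Fintype ι]
    [Fintype κ] (m : Measure X) {f : X → Y} (hf : Measurable f) {α : ι → Set Y}
    (hα : ∀ i, MeasurableSet (α i)) {β : κ → Set Y} (hβ : ∀ k, MeasurableSet (β k)) :
    condEnt (m.map f) α β = condEnt m (fun i => f ⁻¹' α i) (fun k => f ⁻¹' β k) := by
  simp only [condEnt, Measure.map_apply hf ((hα _).inter (hβ _)), Measure.map_apply hf (hβ _),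
    preimage_inter]

lemma joinIter_eq_joinPreimage {X : Type*} (T : X → X) (l : ℕ) {r : ℕ} (α : Fin r → Set X)
    (n : ℕ) : joinIter T l α n = joinPreimage (fun i : Fin n => T^[((i : ℕ) + 1) * l]) α :=
  rfl

section Dynamics

variable {X : Type*} [MeasurableSpace X] (m : Measure X) [IsFiniteMeasure m] {T : X → X} {r : ℕ}
  {α : Fin r → Set X}

lemma condEnt_joinIter_antitone (hT : Measurable T) (hα : IsMeasurablePartition α) (l : ℕ) :
    Antitone fun n => condEnt m α (joinIter T l α n) := by
  refine antitone_nat_of_succ_le fun n => ?_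
  simp only [joinIter_eq_joinPreimage]
  exact condEnt_le_of_refines m hα.measurableSet
    (hα.joinPreimage fun _ => hT.iterate _).pairwise_disjoint
    (hα.joinPreimage fun _ => hT.iterate _) (· ∘ Fin.castSucc)
    fun c => joinPreimage_subset_comp Fin.castSucc (fun _ => rfl) c

lemma fiberDynEnt_le_condEnt_joinIter (hT : Measurable T) (hα : IsMeasurablePartition α)
    (l N : ℕ) : fiberDynEnt m T l α ≤ condEnt m α (joinIter T l α N) :=
  limsup_le_of_le (isCoboundedUnder_le_of_le atTop fun _ => condEnt_nonneg m _ _)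
    (eventually_atTop.2 ⟨N, fun _ hn => condEnt_joinIter_antitone m hT hα l hn⟩)

/-- `⋁_{i=1}^N T^{-il} α` with `N = ∑ M_j` refines the join, as every `M_j ≥ 1`. -/
lemma fiberDynEnt_le_condEnt_joinPreimage (hT : Measurable T) (hα : IsMeasurablePartition α)
    (l : ℕ) {J : Type*} [Fintype J] [DecidableEq J] (M : J → ℕ) (hM : ∀ j, 0 < M j) :
    fiberDynEnt m T l α ≤ condEnt m α (joinPreimage (fun j => T^[M j * l]) α) := by
  have hlt (j : J) : M j - 1 < ∑ j, M j :=
    (Nat.sub_lt (hM j) one_pos).trans_le (Finset.single_le_sum (by simp) (Finset.mem_univ j))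
  refine (fiberDynEnt_le_condEnt_joinIter m hT hα l (∑ j, M j)).trans ?_
  rw [joinIter_eq_joinPreimage]
  refine condEnt_le_of_refines m hα.measurableSet
    (hα.joinPreimage fun _ => hT.iterate _).pairwise_disjoint
    (hα.joinPreimage fun _ => hT.iterate _) _
    fun c => joinPreimage_subset_comp (fun j => ⟨M j - 1, hlt j⟩) (fun j => ?_) c
  rw [Nat.sub_add_cancel (hM j)]

end Dynamics

lemma map_iterate_of_map_eq {X Y : Type*} [MeasurableSpace X] {T : X → X} (hT : Measurable T)
    {S : Y → Y} {μy : Y → Measure X} (hequiv : ∀ y, (μy y).map T = μy (S y)) (n : ℕ) (y : Y) :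
    (μy y).map T^[n] = μy (S^[n] y) := by
  induction n generalizing y with
  | zero => simp
  | succ n ih =>
    rw [iterate_succ, ← Measure.map_map (hT.iterate n) hT, hequiv, ih, iterate_succ_apply]

lemma exists_pos_mul_of_lt {k l : ℕ} {b : Fin k → ℕ}
    (hgaps : ∀ j : Fin k, ∀ hj : (j : ℕ) + 1 < k,
      ∃ m : ℕ, 0 < m ∧ b ⟨(j : ℕ) + 1, hj⟩ = b j + m * l)
    {i j : Fin k} (hij : i < j) : ∃ m : ℕ, 0 < m ∧ b j = b i + m * l := by
  suffices ∀ n (hn : n < k), (i : ℕ) < n → ∃ m : ℕ, 0 < m ∧ b ⟨n, hn⟩ = b i + m * l from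
    this j j.2 hij
  intro n
  induction n with
  | zero => intro _ h; omega
  | succ n ih =>
    intro hn hin
    rcases (Nat.lt_succ_iff.1 hin).eq_or_lt with rfl | hlt
    · exact hgaps i hn
    obtain ⟨m₁, hm₁, h₁⟩ := ih (by omega) hlt
    obtain ⟨m₂, hm₂, h₂⟩ := hgaps ⟨n, by omega⟩ hn
    exact ⟨m₁ + m₂, by omega, by rw [h₂, h₁]; ring⟩

theorem sum_fiberDynEnt_le_partEnt_joinPreimage {X Y : Type*} [MeasurableSpace X] {T : X → X}
    (hT : Measurable T) {S : Y → Y} {μy : Y → Measure X} [∀ y, IsProbabilityMeasure (μy y)]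
    (hequiv : ∀ y, (μy y).map T = μy (S y)) {r : ℕ} {α : Fin r → Set X}
    (hα : IsMeasurablePartition α) (l : ℕ) {k : ℕ} (b : Fin k → ℕ)
    (hb : ∀ i j, i < j → ∃ m : ℕ, 0 < m ∧ b j = b i + m * l) (y : Y) :
    ∑ j, fiberDynEnt (μy (S^[b j] y)) T l α ≤
      partEnt (μy y) (joinPreimage (fun j => T^[b j]) α) := by
  induction k with
  | zero => simpa using partEnt_nonneg (μy y) _
  | succ k ih =>
    set A := fun i => T^[b 0] ⁻¹' α i
    set B := joinPreimage (fun j : Fin k => T^[b j.succ]) α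
    have hB := hα.joinPreimage fun j : Fin k => hT.iterate (b j.succ)
    choose M hM using fun j : Fin k => hb 0 j.succ (Fin.succ_pos j)
    have head : fiberDynEnt (μy (S^[b 0] y)) T l α ≤ condEnt (μy y) A B := calc
      _ = fiberDynEnt ((μy y).map T^[b 0]) T l α := by rw [map_iterate_of_map_eq hT hequiv]
      _ ≤ condEnt ((μy y).map T^[b 0]) α (joinPreimage (fun j => T^[M j * l]) α) :=
        fiberDynEnt_le_condEnt_joinPreimage _ hT hα l M fun j => (hM j).1
      _ = condEnt (μy y) A B := by
        rw [condEnt_map _ (hT.iterate _) hα.measurableSet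
          (hα.joinPreimage fun _ => hT.iterate _).measurableSet]
        congr
        funext t
        rw [preimage_joinPreimage]
        congr
        funext j
        rw [← iterate_add, (hM j).2, add_comm]
    have chain : partEnt (μy y) (joinPreimage (fun j => T^[b j]) α) =
        partEnt (μy y) B + condEnt (μy y) A B := by
      rw [← partEnt_inter_eq_add_condEnt _ (hα.preimage (hT.iterate _)) hB.measurableSet,
        ← partEnt_comp_equiv _ _ (Fin.consEquiv fun _ => Fin r)]
      congr
      funext p
      exact joinPreimage_cons _ _ _ _
    rw [Fin.sum_univ_succ, chain, add_comm (partEnt _ _)]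
    exact add_le_add head
      (ih (fun j => b j.succ) fun i j hij => hb _ _ (Fin.succ_lt_succ_iff.2 hij))

theorem stmt12_general {X Y : Type*} [MeasurableSpace X]
    (T : X → X) (hT : Measurable T)
    (S : Y → Y)
    (μy : Y → Measure X) (hprob : ∀ y, IsProbabilityMeasure (μy y))
    (hequiv : ∀ y, (μy y).map T = μy (S y))
    (r : ℕ) (α : Fin r → Set X) (hαm : ∀ i, MeasurableSet (α i))
    (hαdisj : Pairwise (Function.onFun Disjoint α))
    (hαcover : ⋃ i, α i = Set.univ)
    (l : ℕ)
    (k : ℕ) (b : Fin k → ℕ)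
    (hgaps : ∀ j : Fin k, ∀ hj : (j : ℕ) + 1 < k,
      ∃ m : ℕ, 0 < m ∧ b ⟨(j : ℕ) + 1, hj⟩ = b j + m * l)
    (y : Y) :
    ∑ j : Fin k, fiberDynEnt (μy (S^[b j] y)) T l α ≤
      partEnt (μy y) (fun s : Fin k → Fin r => ⋂ j, T^[b j] ⁻¹' α (s j)) := by
  have := hprob
  exact sum_fiberDynEnt_le_partEnt_joinPreimage hT hequiv ⟨hαm, hαdisj, hαcover⟩ l b
    (fun _ _ => exists_pos_mul_of_lt hgaps) y

/-- Key entropy lower bound along return times whose gaps are positive multiples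
of `l`: `H_{μ_y}(⋁_j T^{-b_j} α) ≥ Σ_j h_{μ_{S^{b_j} y}}(T^l, α)`. -/
theorem stmt12 {X Y : Type*} [MeasurableSpace X] [MeasurableSpace Y]
    (T : X → X) (hT : Measurable T)
    (T' : X → X) (hT' : Measurable T')
    (hTinv : Function.LeftInverse T' T ∧ Function.RightInverse T' T)
    (S : Y → Y)
    (μy : Y → Measure X) (hprob : ∀ y, IsProbabilityMeasure (μy y))
    (hequiv : ∀ y, (μy y).map T = μy (S y))
    (r : ℕ) (α : Fin r → Set X) (hαm : ∀ i, MeasurableSet (α i))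
    (hαdisj : Pairwise (Function.onFun Disjoint α))
    (hαcover : ⋃ i, α i = Set.univ)
    (l : ℕ) (hl : 0 < l)
    (k : ℕ) (b : Fin k → ℕ) (hb : StrictMono b)
    (hgaps : ∀ j : Fin k, ∀ hj : (j : ℕ) + 1 < k,
      ∃ m : ℕ, 0 < m ∧ b ⟨(j : ℕ) + 1, hj⟩ = b j + m * l)
    (y : Y) :
    ∑ j : Fin k, fiberDynEnt (μy (S^[b j] y)) T l α ≤
      partEnt (μy y) (fun s : Fin k → Fin r => ⋂ j, T^[b j] ⁻¹' α (s j)) :=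
  stmt12_general T hT S μy hprob hequiv r α hαm hαdisj hαcover l k b hgaps y
end
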